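/- arXiv:1105.0087 — 2 statements merged into one kernel-verified Lean document; each statement's English description precedes it below -/
import Mathlib

section
/- Let m ≥ 8 and let d be an odd integer. If c(d−m+5, m−2) < c(d−m+4, m) and c(d−m+5, m−2) < c((d+3)/2, (d+5)/2), where c(x,y) = xy − x(x+1)/2, then 3d > 4m − 15 and 5d² + (68 − 16m)d + 12m² − 100m + 215 > 0. -/
/-! Both conclusions are the hypotheses with the denominators cleared: with `x = d - m + 5`,
`c (x - 1) m - c x (m - 2) = 3x - m = 3d - 4m + 15`, and eight times
`c ((d + 3) / 2) ((d + 5) / 2) - c x (m - 2)` is the quadratic in the second conclusion. -/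

namespace Admissibility

def c (x y : ℚ) : ℚ := x * y - x * (x + 1) / 2

theorem c_pred_sub_c (x y : ℚ) : c (x - 1) y - c x (y - 2) = 3 * x - y := by
  unfold c; ring

theorem c_eq_mul_div_two (x y : ℚ) : c x y = x * (2 * y - 1 - x) / 2 := by
  unfold c; ring

end Admissibility

open Admissibility in
theorem admissibility_odd_reduction_general (m d : ℤ)
    (h1 : ((d : ℚ) - m + 5) * ((m : ℚ) - 2) - ((d : ℚ) - m + 5) * (((d : ℚ) - m + 5) + 1) / 2 <
          ((d : ℚ) - m + 4) * (m : ℚ) - ((d : ℚ) - m + 4) * (((d : ℚ) - m + 4) + 1) / 2)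
    (h2 : ((d : ℚ) - m + 5) * ((m : ℚ) - 2) - ((d : ℚ) - m + 5) * (((d : ℚ) - m + 5) + 1) / 2 <
          (((d : ℚ) + 3) / 2) * (((d : ℚ) + 5) / 2) -
            (((d : ℚ) + 3) / 2) * ((((d : ℚ) + 3) / 2) + 1) / 2) :
    3 * d > 4 * m - 15 ∧ 5 * d ^ 2 + (68 - 16 * m) * d + 12 * m ^ 2 - 100 * m + 215 > 0 := by
  have hc1 : c (d - m + 5) (m - 2) < c (d - m + 5 - 1) m := by
    rw [show (d : ℚ) - m + 5 - 1 = d - m + 4 by ring]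
    exact h1
  have hc2 : c (d - m + 5) (m - 2) < c ((d + 3) / 2) ((d + 5) / 2) := h2
  rw [c_eq_mul_div_two, c_eq_mul_div_two] at hc2
  have hlin : (3 : ℚ) * d > 4 * m - 15 := by
    linarith [c_pred_sub_c ((d : ℚ) - m + 5) m]
  have hquad : (5 : ℚ) * d ^ 2 + (68 - 16 * m) * d + 12 * m ^ 2 - 100 * m + 215 > 0 := by
    linarith
  exact ⟨by exact_mod_cast hlin, by exact_mod_cast hquad⟩

/-- Reduction step in Lemma 4.5(ii), odd case. -/
theorem admissibility_odd_reduction (m d : ℤ) (hm : 8 ≤ m) (hdodd : Odd d)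
    (h1 : ((d : ℚ) - m + 5) * ((m : ℚ) - 2) - ((d : ℚ) - m + 5) * (((d : ℚ) - m + 5) + 1) / 2 <
          ((d : ℚ) - m + 4) * (m : ℚ) - ((d : ℚ) - m + 4) * (((d : ℚ) - m + 4) + 1) / 2)
    (h2 : ((d : ℚ) - m + 5) * ((m : ℚ) - 2) - ((d : ℚ) - m + 5) * (((d : ℚ) - m + 5) + 1) / 2 <
          (((d : ℚ) + 3) / 2) * (((d : ℚ) + 5) / 2) -
            (((d : ℚ) + 3) / 2) * ((((d : ℚ) + 3) / 2) + 1) / 2) :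
    3 * d > 4 * m - 15 ∧ 5 * d ^ 2 + (68 - 16 * m) * d + 12 * m ^ 2 - 100 * m + 215 > 0 :=
  admissibility_odd_reduction_general m d h1 h2
end

section
/- For m > 10 and integer x with 1 ≤ x ≤ m−6 and x + m even, the inequality 5x² + (6 − 6m)x + m² + 2m > 0 fails whenever m/5 + 1 < x < m − 3. Equivalently: if m > 10, x + m even and m/5 + 1 < x ≤ m − 6, then 5x² + (6 − 6m)x + m² + 2m ≤ 0. -/
/-! With `t = 5x - m - 6`, five times the quadratic equals `t (t - (4m - 18)) - 8 (m - 9)`.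
In the middle range `0 ≤ t ≤ 4m - 18`, so the first term is nonpositive, and `m > 9` makes the
second negative. -/

theorem five_mul_quadratic_eq {R : Type*} [CommRing R] (m x : R) :
    5 * (5 * x ^ 2 + (6 - 6 * m) * x + m ^ 2 + 2 * m) =
      (5 * x - m - 6) * (5 * x - m - 6 - (4 * m - 18)) - 8 * (m - 9) := by
  ring

theorem quadratic_neg_of_le_of_le {R : Type*} [CommRing R] [LinearOrder R] [IsStrictOrderedRing R]
    {m x : R} (hm : 9 < m) (hlo : m + 6 ≤ 5 * x) (hhi : 5 * x ≤ 5 * m - 12) :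
    5 * x ^ 2 + (6 - 6 * m) * x + m ^ 2 + 2 * m < 0 := by
  have hprod : (5 * x - m - 6) * (5 * x - m - 6 - (4 * m - 18)) ≤ 0 :=
    mul_nonpos_of_nonneg_of_nonpos (by linarith) (by linarith)
  have hfive : 5 * (5 * x ^ 2 + (6 - 6 * m) * x + m ^ 2 + 2 * m) < 0 := by
    rw [five_mul_quadratic_eq]
    linarith
  exact neg_of_mul_neg_right hfive (by norm_num)

theorem middle_range_nonadmissible_general (m x : ℤ) (hm : 10 < m)
    (h1 : m + 5 < 5 * x) (h2 : x ≤ m - 6) :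
    5 * x ^ 2 + (6 - 6 * m) * x + m ^ 2 + 2 * m ≤ 0 :=
  (quadratic_neg_of_le_of_le (by linarith) (by omega) (by omega)).le

/-- Lemma 4.5(iii): non-admissibility of middle-range points `(x, m)` with `x + m` even. -/
theorem middle_range_nonadmissible (m x : ℤ) (hm : 10 < m) (heven : Even (x + m))
    (h1 : m + 5 < 5 * x) (h2 : x ≤ m - 6) :
    5 * x ^ 2 + (6 - 6 * m) * x + m ^ 2 + 2 * m ≤ 0 :=
  middle_range_nonadmissible_general m x hm h1 h2
end
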